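/- Let S : X → E be an admissible impact map and A ⊂ E an admissible acceptance set. For Z ∈ X' define K_Z : X × E' → [−∞,∞] by K_Z(X,W) := σ_A(W) + E[⟨X,Z⟩] − E[S(X)W]. Then the following statements are equivalent: (a) σ_{S^{-1}(A)} = α; (b) α is σ(X',X)-upper semicontinuous; (c) for every Z ∈ X', inf_{X ∈ X} sup_{W ∈ E'} K_Z(X,W) = sup_{W ∈ E'} inf_{X ∈ X} K_Z(X,W). -/

import Mathlib

open MeasureTheory Filter Set
open scoped ENNReal

noncomputable section

namespace SystemicRisk

variable {Ω : Type*} [MeasurableSpace Ω]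

/-- A random variable is essentially bounded. -/
def EssBdd {μ : Measure Ω} (f : Ω →ₘ[μ] ℝ) : Prop :=
  ∃ C : ℝ, ∀ᵐ ω ∂μ, |f ω| ≤ C

/-- The scalar pairing `E[U W]`. -/
def ip {μ : Measure Ω} (U W : Ω →ₘ[μ] ℝ) : ℝ := ∫ ω, U ω * W ω ∂μ

/-- The Köthe dual of a set of random variables. -/
def kdual {μ : Measure Ω} (L : Set (Ω →ₘ[μ] ℝ)) : Set (Ω →ₘ[μ] ℝ) :=
  {Z | ∀ f ∈ L, Integrable (fun ω => f ω * Z ω) μ}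

/-- `nrm` is a Banach lattice norm on `L` (w.r.t. the a.s. order). -/
structure IsBLNorm {μ : Measure Ω} (L : Set (Ω →ₘ[μ] ℝ)) (nrm : (Ω →ₘ[μ] ℝ) → ℝ) : Prop where
  nonneg : ∀ f ∈ L, 0 ≤ nrm f
  eq_zero_iff : ∀ f ∈ L, (nrm f = 0 ↔ f = 0)
  smul_eq : ∀ f ∈ L, ∀ c : ℝ, nrm (c • f) = |c| * nrm f
  triangle : ∀ f ∈ L, ∀ g ∈ L, nrm (f + g) ≤ nrm f + nrm g
  solid : ∀ f ∈ L, ∀ g ∈ L, |f| ≤ |g| → nrm f ≤ nrm g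
  complete : ∀ u : ℕ → (Ω →ₘ[μ] ℝ), (∀ n, u n ∈ L) →
      (∀ ε : ℝ, 0 < ε → ∃ N : ℕ, ∀ m ≥ N, ∀ n ≥ N, nrm (u m - u n) < ε) →
      ∃ f ∈ L, ∀ ε : ℝ, 0 < ε → ∃ N : ℕ, ∀ n ≥ N, nrm (u n - f) < ε

/-- `L` is an admissible space: a linear subspace of `L^0` which is a Banach lattice
(for the a.s. order, with norm `nrm`) satisfying `L^∞ ⊆ L ⊆ L^1`. -/
structure IsAdmissible {μ : Measure Ω} (L : Set (Ω →ₘ[μ] ℝ)) (nrm : (Ω →ₘ[μ] ℝ) → ℝ) : Prop where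
  zero_mem : (0 : Ω →ₘ[μ] ℝ) ∈ L
  add_mem : ∀ f ∈ L, ∀ g ∈ L, f + g ∈ L
  smul_mem : ∀ (c : ℝ), ∀ f ∈ L, c • f ∈ L
  sup_mem : ∀ f ∈ L, ∀ g ∈ L, f ⊔ g ∈ L
  inf_mem : ∀ f ∈ L, ∀ g ∈ L, f ⊓ g ∈ L
  linfty_subset : ∀ f, EssBdd f → f ∈ L
  subset_lone : ∀ f ∈ L, Integrable f μ
  banach : IsBLNorm L nrm

variable {d : ℕ}

/-- The product space `X = X_1 × ⋯ × X_d`. -/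
def prodSet {μ : Measure Ω} (Li : Fin d → Set (Ω →ₘ[μ] ℝ)) : Set (Fin d → (Ω →ₘ[μ] ℝ)) :=
  {X | ∀ i, X i ∈ Li i}

/-- The vector pairing `E[⟨X,Z⟩] = ∑ i, E[X_i Z_i]`. -/
def pairing {μ : Measure Ω} (X Z : Fin d → (Ω →ₘ[μ] ℝ)) : ℝ := ∑ i, ip (X i) (Z i)

/-- The constant random vector associated with `m ∈ ℝ^d`. -/
def cvec (μ : Measure Ω) (m : Fin d → ℝ) : Fin d → (Ω →ₘ[μ] ℝ) :=
  fun i => (AEEqFun.const Ω (m i) : Ω →ₘ[μ] ℝ)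

/-- The weak topology `σ(P, D)` on a set of random vectors `P` induced by the pairing
with elements of `D`. -/
def wtop {μ : Measure Ω} (P D : Set (Fin d → (Ω →ₘ[μ] ℝ))) : TopologicalSpace ↥P :=
  TopologicalSpace.induced
    (fun X : ↥P => fun Z : ↥D => pairing (X : Fin d → (Ω →ₘ[μ] ℝ)) (Z : Fin d → (Ω →ₘ[μ] ℝ)))
    Pi.topologicalSpace

/-- The weak topology `σ(P, D)` on a set of random variables `P` induced by the pairing
with elements of `D`. -/
def wtop1 {μ : Measure Ω} (P D : Set (Ω →ₘ[μ] ℝ)) : TopologicalSpace ↥P :=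
  TopologicalSpace.induced
    (fun U : ↥P => fun W : ↥D => ip (U : Ω →ₘ[μ] ℝ) (W : Ω →ₘ[μ] ℝ))
    Pi.topologicalSpace

/-- An admissible impact map `S : X → E`. -/
structure IsAdmissibleImpact {μ : Measure Ω} (XX XX' : Set (Fin d → (Ω →ₘ[μ] ℝ)))
    (EE EE' : Set (Ω →ₘ[μ] ℝ)) (S : (Fin d → (Ω →ₘ[μ] ℝ)) → (Ω →ₘ[μ] ℝ)) : Prop where
  mapsTo : ∀ X ∈ XX, S X ∈ EE
  nonconst : ∃ X ∈ XX, ∃ Y ∈ XX, S X ≠ S Y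
  normalized : S 0 = 0
  mono : ∀ X ∈ XX, ∀ Y ∈ XX, X ≤ Y → S X ≤ S Y
  concave : ∀ X ∈ XX, ∀ Y ∈ XX, ∀ t : ℝ, 0 ≤ t → t ≤ 1 →
      t • S X + (1 - t) • S Y ≤ S (t • X + (1 - t) • Y)
  usc : ∀ W ∈ EE', (0 : Ω →ₘ[μ] ℝ) ≤ W →
      @UpperSemicontinuous (↥XX) ℝ (wtop XX XX') _
        (fun X : ↥XX => ∫ ω, S (X : Fin d → (Ω →ₘ[μ] ℝ)) ω * W ω ∂μ)

/-- An admissible acceptance set `A ⊆ E` (relative to the impact map `S`). -/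
structure IsAdmissibleAcceptance {μ : Measure Ω} (XX : Set (Fin d → (Ω →ₘ[μ] ℝ)))
    (EE EE' : Set (Ω →ₘ[μ] ℝ)) (S : (Fin d → (Ω →ₘ[μ] ℝ)) → (Ω →ₘ[μ] ℝ))
    (A : Set (Ω →ₘ[μ] ℝ)) : Prop where
  subset : A ⊆ EE
  preimage_nonempty : ∃ X ∈ XX, S X ∈ A
  preimage_proper : ∃ X ∈ XX, S X ∉ A
  zero_mem : (0 : Ω →ₘ[μ] ℝ) ∈ A
  mono : ∀ U ∈ A, ∀ V ∈ EE, (0 : Ω →ₘ[μ] ℝ) ≤ V → U + V ∈ A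
  convex : ∀ U ∈ A, ∀ V ∈ A, ∀ t : ℝ, 0 ≤ t → t ≤ 1 → t • U + (1 - t) • V ∈ A
  closed : @IsClosed (↥EE) (wtop1 EE EE') {U : ↥EE | (U : Ω →ₘ[μ] ℝ) ∈ A}

/-- The systemic acceptance set `S⁻¹(A) = {X ∈ X : S(X) ∈ A}`. -/
def sysAcc {μ : Measure Ω} (XX : Set (Fin d → (Ω →ₘ[μ] ℝ)))
    (S : (Fin d → (Ω →ₘ[μ] ℝ)) → (Ω →ₘ[μ] ℝ)) (A : Set (Ω →ₘ[μ] ℝ)) :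
    Set (Fin d → (Ω →ₘ[μ] ℝ)) :=
  {X ∈ XX | S X ∈ A}

/-- The "first allocate, then aggregate" systemic risk measure `ρ`. -/
def rho (μ : Measure Ω) (S : (Fin d → (Ω →ₘ[μ] ℝ)) → (Ω →ₘ[μ] ℝ)) (A : Set (Ω →ₘ[μ] ℝ))
    (X : Fin d → (Ω →ₘ[μ] ℝ)) : EReal :=
  ⨅ m ∈ {m : Fin d → ℝ | S (X + cvec μ m) ∈ A}, ((∑ i, m i : ℝ) : EReal)

/-- The (lower) support function of a set of random vectors. -/
def suppV {μ : Measure Ω} (B : Set (Fin d → (Ω →ₘ[μ] ℝ))) (Z : Fin d → (Ω →ₘ[μ] ℝ)) : EReal :=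
  ⨅ X ∈ B, ((pairing X Z : ℝ) : EReal)

/-- The barrier cone of a set of random vectors, inside the dual set `D`. -/
def barrV {μ : Measure Ω} (B D : Set (Fin d → (Ω →ₘ[μ] ℝ))) : Set (Fin d → (Ω →ₘ[μ] ℝ)) :=
  {Z ∈ D | ⊥ < suppV B Z}

/-- The (lower) support function of a set of random variables. -/
def suppS {μ : Measure Ω} (A : Set (Ω →ₘ[μ] ℝ)) (W : Ω →ₘ[μ] ℝ) : EReal :=
  ⨅ U ∈ A, ((ip U W : ℝ) : EReal)

/-- The barrier cone of a set of random variables, inside the dual set `D`. -/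
def barrS {μ : Measure Ω} (A D : Set (Ω →ₘ[μ] ℝ)) : Set (Ω →ₘ[μ] ℝ) :=
  {W ∈ D | ⊥ < suppS A W}

/-- The generic penalty function with dual variables `W` ranging over `K`. -/
def penalty {μ : Measure Ω} (XX : Set (Fin d → (Ω →ₘ[μ] ℝ)))
    (A : Set (Ω →ₘ[μ] ℝ)) (S : (Fin d → (Ω →ₘ[μ] ℝ)) → (Ω →ₘ[μ] ℝ))
    (K : Set (Ω →ₘ[μ] ℝ)) (Z : Fin d → (Ω →ₘ[μ] ℝ)) : EReal :=
  ⨆ W ∈ K, (suppS A W +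
    ⨅ X ∈ XX, ((pairing X Z - ∫ ω, S X ω * W ω ∂μ : ℝ) : EReal))

/-- a.s. strictly positive random variables. -/
def strictPos (μ : Measure Ω) : Set (Ω →ₘ[μ] ℝ) := {W | ∀ᵐ ω ∂μ, 0 < W ω}

/-- The penalty function `α`. -/
def alpha {μ : Measure Ω} (XX : Set (Fin d → (Ω →ₘ[μ] ℝ))) (EE' : Set (Ω →ₘ[μ] ℝ))
    (A : Set (Ω →ₘ[μ] ℝ)) (S : (Fin d → (Ω →ₘ[μ] ℝ)) → (Ω →ₘ[μ] ℝ)) :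
    (Fin d → (Ω →ₘ[μ] ℝ)) → EReal :=
  penalty XX A S (barrS A EE')

/-- The penalty function `α⁺`. -/
def alphaPlus {μ : Measure Ω} (XX : Set (Fin d → (Ω →ₘ[μ] ℝ))) (EE' : Set (Ω →ₘ[μ] ℝ))
    (A : Set (Ω →ₘ[μ] ℝ)) (S : (Fin d → (Ω →ₘ[μ] ℝ)) → (Ω →ₘ[μ] ℝ)) :
    (Fin d → (Ω →ₘ[μ] ℝ)) → EReal :=
  penalty XX A S (barrS A EE' ∩ (strictPos μ ∪ {0}))

/-- a.s. strictly positive random vectors. -/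
def strictPosV (μ : Measure Ω) (d : ℕ) : Set (Fin d → (Ω →ₘ[μ] ℝ)) :=
  {Z | ∀ i, ∀ᵐ ω ∂μ, 0 < Z i ω}

/-- The set `C` of nonnegative dual vectors with all components of expectation one. -/
def Cset {μ : Measure Ω} (XX' : Set (Fin d → (Ω →ₘ[μ] ℝ))) : Set (Fin d → (Ω →ₘ[μ] ℝ)) :=
  {Z ∈ XX' | (∀ i, (0 : Ω →ₘ[μ] ℝ) ≤ Z i) ∧ ∀ i, (∫ ω, Z i ω ∂μ) = 1}

/-- A map with values in `[−∞,∞]` is proper on `P` if it never attains `−∞` on `P`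
and is finite somewhere on `P`. -/
def ProperOn {β : Type*} (P : Set β) (f : β → EReal) : Prop :=
  (∀ x ∈ P, f x ≠ ⊥) ∧ ∃ x ∈ P, f x ≠ ⊤

/-- The positive part of an extended real number, as an extended nonnegative real. -/
def epos (x : EReal) : ℝ≥0∞ := if x = ⊤ then ⊤ else ENNReal.ofReal x.toReal

/-- The integral of an extended-real-valued function. -/
def eintegral (μ : Measure Ω) (g : Ω → EReal) : EReal :=
  ((∫⁻ ω, epos (g ω) ∂μ : ℝ≥0∞) : EReal) - ((∫⁻ ω, epos (-(g ω)) ∂μ : ℝ≥0∞) : EReal)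

/-- The Lagrangian-type function `K_Z(X,W) = σ_A(W) + E[⟨X,Z⟩] − E[S(X)W]`. -/
def KZ {μ : Measure Ω} {d : ℕ} (A : Set (Ω →ₘ[μ] ℝ))
    (S : (Fin d → (Ω →ₘ[μ] ℝ)) → (Ω →ₘ[μ] ℝ)) (Z : Fin d → (Ω →ₘ[μ] ℝ))
    (X : Fin d → (Ω →ₘ[μ] ℝ)) (W : Ω →ₘ[μ] ℝ) : EReal :=
  suppS A W + ((pairing X Z - ∫ ω, S X ω * W ω ∂μ : ℝ) : EReal)

end SystemicRisk

/-!
`σ_{S⁻¹(A)}` is an infimum of `σ(X',X)`-continuous linear functions, hence upper semicontinuous,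
and `α ≤ σ_{S⁻¹(A)}` always. Conversely, `α(Z) = sup_W inf_{U ∈ A, X} (E[UW] + E[⟨X,Z⟩] - E[S(X)W])`
is a supremum of infima of linear functions of `(W, Z)`, so `α` is superadditive and positively
homogeneous. If it is also upper semicontinuous, Hahn–Banach in `X' × ℝ` shows that `α` is the
infimum of the linear functions `⟨Y, ·⟩` lying above it, and every such `Y` is acceptable: the
barrier cone of `A` consists of nonnegative `W`, for which `X ↦ E[S(X)W]` is concave and upper
semicontinuous, and an `ε`-supergradient `Z` of it at `Y` gives `σ_A(W) ≤ E[S(Y)W] + ε`; since the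
closed convex set `A` is the intersection of the half-spaces `{U : σ_A(W) ≤ E[UW]}`, `S(Y) ∈ A`.
Hence `σ_{S⁻¹(A)} ≤ α`.

For the minimax identity, `sup_W K_Z(X, W)` is `E[⟨X,Z⟩]` if `S(X) ∈ A` and `+∞` otherwise, so the
inf-sup is `σ_{S⁻¹(A)}(Z)`, while the sup-inf is `α(Z)` because `K_Z(·, W) = -∞` outside the
barrier cone.
-/

namespace WeakBilin

variable {E F : Type*} [AddCommGroup E] [Module ℝ E] [AddCommGroup F] [Module ℝ F]
  (B : E →ₗ[ℝ] F →ₗ[ℝ] ℝ)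

theorem exists_forall_lt_of_notMem {C : Set (WeakBilin B)} (hconv : Convex ℝ C)
    (hclosed : IsClosed C) {x : WeakBilin B} (hx : x ∉ C) :
    ∃ (y : F) (u : ℝ), B x y < u ∧ ∀ a ∈ C, u < B a y := by
  obtain ⟨f, u, hfx, hfC⟩ := geometric_hahn_banach_point_closed hconv hclosed hx
  obtain ⟨y, rfl⟩ := LinearMap.dualEmbedding_surjective B f
  exact ⟨y, u, hfx, hfC⟩

theorem exists_forall_lt_of_notMem_prod {C : Set (WeakBilin B × ℝ)} (hconv : Convex ℝ C)
    (hclosed : IsClosed C) {x : WeakBilin B × ℝ} (hx : x ∉ C) :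
    ∃ (y : F) (s u : ℝ), B x.1 y + x.2 * s < u ∧ ∀ a ∈ C, u < B a.1 y + a.2 * s := by
  obtain ⟨f, u, hfx, hfC⟩ := geometric_hahn_banach_point_closed hconv hclosed hx
  obtain ⟨y, hy⟩ := LinearMap.dualEmbedding_surjective B (f.comp (.inl ℝ _ ℝ))
  have hf : ∀ p : WeakBilin B × ℝ, f p = B p.1 y + p.2 * f (0, 1) := fun p => by
    calc f p = f (p.1, 0) + p.2 * f (0, 1) := by
          rw [← smul_eq_mul, ← map_smul, ← map_add]; simp
      _ = B p.1 y + p.2 * f (0, 1) := congrArg (· + _) (DFunLike.congr_fun hy p.1).symm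
  exact ⟨y, f (0, 1), u, hf x ▸ hfx, fun a ha => hf a ▸ hfC a ha⟩

theorem exists_forall_sub_le_of_concaveOn {φ : WeakBilin B → ℝ} (hconc : ConcaveOn ℝ univ φ)
    (husc : UpperSemicontinuous φ) (x₀ : WeakBilin B) {ε : ℝ} (hε : 0 < ε) :
    ∃ y : F, ∀ x, φ x - B x y ≤ φ x₀ - B x₀ y + ε := by
  have hconv : Convex ℝ {p : WeakBilin B × ℝ | p.2 ≤ φ p.1} := by
    simpa using hconc.convex_hypograph
  have hx₀ : (x₀, φ x₀ + ε) ∉ {p : WeakBilin B × ℝ | p.2 ≤ φ p.1} := by simpa using hε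
  obtain ⟨y, s, u, hlt, hsep⟩ := exists_forall_lt_of_notMem_prod B hconv
    (upperSemicontinuous_iff_IsClosed_hypograph.mp husc) hx₀
  have hgraph : ∀ x, B x₀ y + (φ x₀ + ε) * s < B x y + φ x * s :=
    fun x => hlt.trans (hsep (x, φ x) (show φ x ≤ φ x from le_rfl))
  have hs : 0 < -s := by
    by_contra! hs
    nlinarith [hgraph x₀]
  refine ⟨(-s)⁻¹ • y, fun x => ?_⟩
  simp only [map_smul, smul_eq_mul]
  have h := hgraph x
  have hcancel : ∀ r, -s * ((-s)⁻¹ * r) = r := fun r => mul_inv_cancel_left₀ hs.ne' r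
  rw [← mul_le_mul_iff_of_pos_left hs, mul_sub, mul_add, mul_sub, hcancel, hcancel]
  linarith

theorem exists_forall_nonneg_of_notMem_convexCone {H : ConvexCone ℝ (WeakBilin B × ℝ)}
    (hclosed : IsClosed (H : Set (WeakBilin B × ℝ))) (h0 : (0 : WeakBilin B × ℝ) ∈ H)
    {x : WeakBilin B × ℝ} (hx : x ∉ H) :
    ∃ (y : F) (s : ℝ), B x.1 y + x.2 * s < 0 ∧ ∀ p ∈ H, 0 ≤ B p.1 y + p.2 * s := by
  obtain ⟨y, s, u, hlt, hsep⟩ := exists_forall_lt_of_notMem_prod B H.convex hclosed hx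
  have hB0 : B (0 : WeakBilin B) y = 0 := B.map_zero₂ y
  have hu : u < 0 := by simpa [hB0] using hsep 0 h0
  refine ⟨y, s, hlt.trans hu, fun p hp => ?_⟩
  by_contra! hneg
  have h := hsep _ (H.smul_mem (div_pos_of_neg_of_neg hu hneg) hp)
  have hBsmul : ∀ (c : ℝ) (z : WeakBilin B), B (c • z) y = c * B z y :=
    fun c z => B.map_smul₂ c (z : E) y
  simp only [Prod.smul_fst, Prod.smul_snd, hBsmul, smul_eq_mul] at h
  rw [mul_assoc, ← mul_add, div_mul_cancel₀ _ hneg.ne] at h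
  exact h.false

theorem exists_le_and_lt_of_superlinear {f : WeakBilin B → EReal} (husc : UpperSemicontinuous f)
    (hadd : ∀ z₁ z₂, f z₁ + f z₂ ≤ f (z₁ + z₂))
    (hsmul : ∀ c : ℝ, 0 < c → ∀ z (t : ℝ), (t : EReal) ≤ f z → ((c * t : ℝ) : EReal) ≤ f (c • z))
    (h0 : 0 ≤ f 0) {x₀ : F} (hx₀ : ∀ z, f z ≤ B z x₀) {z₀ : WeakBilin B} {t₀ : ℝ}
    (ht₀ : f z₀ < t₀) : ∃ y : F, (∀ z, f z ≤ B z y) ∧ B z₀ y < t₀ := by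
  let H : ConvexCone ℝ (WeakBilin B × ℝ) :=
    { carrier := {p | (p.2 : EReal) ≤ f p.1}
      smul_mem' := fun c hc p hp => hsmul c hc p.1 p.2 hp
      add_mem' := fun p hp q hq => by
        simpa using (add_le_add hp hq).trans (hadd p.1 q.1) }
  have hclosed : IsClosed (H : Set (WeakBilin B × ℝ)) :=
    husc.IsClosed_hypograph.preimage (continuous_id.prodMap continuous_coe_real_ereal)
  obtain ⟨y, s, hz₀, hH⟩ := exists_forall_nonneg_of_notMem_convexCone B hclosed
    (show ((0 : ℝ) : EReal) ≤ f 0 from h0) (x := (z₀, t₀)) fun h => (h.trans_lt ht₀).false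
  have hs : s ≤ 0 := by
    have := hH (0, -1) (h0.trans' (by norm_num))
    have hB0 : B (0 : WeakBilin B) y = 0 := B.map_zero₂ y
    simp only [hB0] at this
    linarith
  have hbound : ∀ p ∈ H, p.2 ≤ B p.1 x₀ := fun p hp => EReal.coe_le_coe_iff.mp (hp.trans (hx₀ p.1))
  -- Adding `δ (B · x₀ - t) ≥ 0` to the separating functional makes its `ℝ`-coefficient negative.
  set a := B z₀ y + t₀ * s
  set b := B z₀ x₀ - t₀
  set δ := -a / (2 * (|b| + 1))
  have hδ : 0 < δ := div_pos (by linarith) (by positivity)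
  have hδb : a + δ * b < 0 := by
    have : δ * (2 * (|b| + 1)) = -a := div_mul_cancel₀ _ (by positivity)
    nlinarith [le_abs_self b, abs_nonneg b]
  have hκ : 0 < δ - s := by linarith
  refine ⟨(δ - s)⁻¹ • (y + δ • x₀), fun z => ?_, ?_⟩
  · refine EReal.ge_of_forall_gt_iff_ge.mp fun t ht => ?_
    have hp : ((z, t) : WeakBilin B × ℝ) ∈ H := ht.le
    have h1 := hH _ hp
    have h2 := hbound _ hp
    simp only [map_smul, map_add, smul_eq_mul] at h1 h2 ⊢
    rw [EReal.coe_le_coe_iff, le_inv_mul_iff₀ hκ]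
    nlinarith
  · simp only [map_smul, map_add, smul_eq_mul]
    rw [inv_mul_lt_iff₀ hκ]
    nlinarith

end WeakBilin

namespace EReal

theorem iInf_add_coe {ι : Sort*} (g : ι → EReal) (c : ℝ) : (⨅ i, g i) + c = ⨅ i, (g i + c) :=
  Monotone.map_iInf_of_continuousAt (f := (· + (c : EReal)))
    ((continuousAt_add (Or.inr (coe_ne_bot c)) (Or.inr (coe_ne_top c))).comp
      (continuousAt_id.prodMk continuousAt_const))
    (fun _ _ h => add_le_add_left h _) (top_add_coe c)

end EReal

section SupInfLinear

variable {ι V Q : Type*} [AddCommGroup V] [Module ℝ V] [AddCommGroup Q] [Module ℝ Q]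
  (ℓ : ι → V × Q →ₗ[ℝ] ℝ)

theorem iSup_iInf_linear_add_le (z₁ z₂ : Q) :
    (⨆ w, ⨅ i, (ℓ i (w, z₁) : EReal)) + (⨆ w, ⨅ i, (ℓ i (w, z₂) : EReal)) ≤
      ⨆ w, ⨅ i, (ℓ i (w, z₁ + z₂) : EReal) := by
  refine EReal.add_le_of_forall_lt fun a ha b hb => ?_
  obtain ⟨w₁, hw₁⟩ := lt_iSup_iff.mp ha
  obtain ⟨w₂, hw₂⟩ := lt_iSup_iff.mp hb
  refine le_iSup_of_le (w₁ + w₂) ?_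
  calc a + b ≤ (⨅ i, (ℓ i (w₁, z₁) : EReal)) + ⨅ i, (ℓ i (w₂, z₂) : EReal) :=
        add_le_add hw₁.le hw₂.le
    _ ≤ ⨅ i, ((ℓ i (w₁, z₁) : EReal) + ℓ i (w₂, z₂)) := EReal.add_iInf_le_iInf_add
    _ = ⨅ i, (ℓ i (w₁ + w₂, z₁ + z₂) : EReal) := by
        simp only [← EReal.coe_add, ← map_add, Prod.mk_add_mk]

theorem coe_mul_le_iSup_iInf_linear_smul {c : ℝ} (hc : 0 < c) {z : Q} {t : ℝ}
    (ht : (t : EReal) ≤ ⨆ w, ⨅ i, (ℓ i (w, z) : EReal)) :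
    ((c * t : ℝ) : EReal) ≤ ⨆ w, ⨅ i, (ℓ i (w, c • z) : EReal) := by
  refine EReal.ge_of_forall_gt_iff_ge.mp fun r hr => ?_
  have hrt : ((r / c : ℝ) : EReal) < t := by
    rw [EReal.coe_lt_coe_iff, div_lt_iff₀' hc]
    exact EReal.coe_lt_coe_iff.mp hr
  obtain ⟨w, hw⟩ := lt_iSup_iff.mp (hrt.trans_le ht)
  refine le_iSup_of_le (c • w) (le_iInf fun i => ?_)
  have hi : r / c ≤ ℓ i (w, z) := EReal.coe_le_coe_iff.mp (hw.le.trans (iInf_le _ i))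
  rw [← Prod.smul_mk, map_smul, smul_eq_mul, EReal.coe_le_coe_iff]
  exact (div_le_iff₀' hc).mp hi

end SupInfLinear

namespace SystemicRisk

variable {Ω : Type*} [MeasurableSpace Ω] {μ : Measure Ω} {d : ℕ}

section Pairing

theorem ip_add_left {U V W : Ω →ₘ[μ] ℝ} (hU : Integrable (fun ω => U ω * W ω) μ)
    (hV : Integrable (fun ω => V ω * W ω) μ) : ip (U + V) W = ip U W + ip V W := by
  rw [ip, ip, ip, ← integral_add hU hV]
  refine integral_congr_ae ?_
  filter_upwards [AEEqFun.coeFn_add U V] with ω h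
  simp [h, add_mul]

theorem ip_add_right {U W W' : Ω →ₘ[μ] ℝ} (hW : Integrable (fun ω => U ω * W ω) μ)
    (hW' : Integrable (fun ω => U ω * W' ω) μ) : ip U (W + W') = ip U W + ip U W' := by
  rw [ip, ip, ip, ← integral_add hW hW']
  refine integral_congr_ae ?_
  filter_upwards [AEEqFun.coeFn_add W W'] with ω h
  simp [h, mul_add]

theorem ip_smul_left (c : ℝ) (U W : Ω →ₘ[μ] ℝ) : ip (c • U) W = c * ip U W := by
  rw [ip, ip, ← integral_const_mul]
  refine integral_congr_ae ?_
  filter_upwards [AEEqFun.coeFn_smul c U] with ω h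
  simp [h, mul_assoc]

theorem ip_smul_right (c : ℝ) (U W : Ω →ₘ[μ] ℝ) : ip U (c • W) = c * ip U W := by
  rw [ip, ip, ← integral_const_mul]
  refine integral_congr_ae ?_
  filter_upwards [AEEqFun.coeFn_smul c W] with ω h
  simp [h, mul_left_comm]

theorem ip_zero_left (W : Ω →ₘ[μ] ℝ) : ip 0 W = 0 := by
  simpa using ip_smul_left 0 (0 : Ω →ₘ[μ] ℝ) W

theorem ip_zero_right (U : Ω →ₘ[μ] ℝ) : ip U 0 = 0 := by
  simpa using ip_smul_right 0 U (0 : Ω →ₘ[μ] ℝ)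

theorem ip_le_ip_of_le {U V W : Ω →ₘ[μ] ℝ} (hUV : U ≤ V) (hW : 0 ≤ W)
    (hU : Integrable (fun ω => U ω * W ω) μ) (hV : Integrable (fun ω => V ω * W ω) μ) :
    ip U W ≤ ip V W := by
  refine integral_mono_ae hU hV ?_
  filter_upwards [AEEqFun.coeFn_le.mpr hUV, AEEqFun.coeFn_le.mpr hW,
    AEEqFun.coeFn_zero (μ := μ) (β := ℝ)] with ω hUVω hWω h0
  exact mul_le_mul_of_nonneg_right hUVω (by simpa [h0] using hWω)

theorem pairing_comm (X Z : Fin d → Ω →ₘ[μ] ℝ) : pairing X Z = pairing Z X := by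
  simp only [pairing, ip, mul_comm]

theorem pairing_add_left {X X' Z : Fin d → Ω →ₘ[μ] ℝ}
    (hX : ∀ i, Integrable (fun ω => X i ω * Z i ω) μ)
    (hX' : ∀ i, Integrable (fun ω => X' i ω * Z i ω) μ) :
    pairing (X + X') Z = pairing X Z + pairing X' Z := by
  simp only [pairing, ← Finset.sum_add_distrib, Pi.add_apply, ip_add_left (hX _) (hX' _)]

theorem pairing_add_right {X Z Z' : Fin d → Ω →ₘ[μ] ℝ}
    (hZ : ∀ i, Integrable (fun ω => X i ω * Z i ω) μ)
    (hZ' : ∀ i, Integrable (fun ω => X i ω * Z' i ω) μ) :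
    pairing X (Z + Z') = pairing X Z + pairing X Z' := by
  simp only [pairing, ← Finset.sum_add_distrib, Pi.add_apply, ip_add_right (hZ _) (hZ' _)]

theorem pairing_smul_left (c : ℝ) (X Z : Fin d → Ω →ₘ[μ] ℝ) :
    pairing (c • X) Z = c * pairing X Z := by
  simp only [pairing, Finset.mul_sum, Pi.smul_apply, ip_smul_left]

theorem pairing_smul_right (c : ℝ) (X Z : Fin d → Ω →ₘ[μ] ℝ) :
    pairing X (c • Z) = c * pairing X Z := by
  simp only [pairing, Finset.mul_sum, Pi.smul_apply, ip_smul_right]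

def ipBilin (P D : Submodule ℝ (Ω →ₘ[μ] ℝ))
    (h : ∀ U ∈ P, ∀ W ∈ D, Integrable (fun ω => U ω * W ω) μ) : P →ₗ[ℝ] D →ₗ[ℝ] ℝ :=
  LinearMap.mk₂ ℝ (fun U W => ip (U : Ω →ₘ[μ] ℝ) W)
    (fun U U' W => ip_add_left (h _ U.2 _ W.2) (h _ U'.2 _ W.2))
    (fun c _ _ => ip_smul_left c _ _)
    (fun U W W' => ip_add_right (h _ U.2 _ W.2) (h _ U.2 _ W'.2))
    (fun c _ _ => ip_smul_right c _ _)

def pairingBilin (P D : Submodule ℝ (Fin d → Ω →ₘ[μ] ℝ))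
    (h : ∀ X ∈ P, ∀ Z ∈ D, ∀ i, Integrable (fun ω => X i ω * Z i ω) μ) :
    P →ₗ[ℝ] D →ₗ[ℝ] ℝ :=
  LinearMap.mk₂ ℝ (fun X Z => pairing (X : Fin d → Ω →ₘ[μ] ℝ) Z)
    (fun X X' Z => pairing_add_left (h _ X.2 _ Z.2) (h _ X'.2 _ Z.2))
    (fun c _ _ => pairing_smul_left c _ _)
    (fun X Z Z' => pairing_add_right (h _ X.2 _ Z.2) (h _ X.2 _ Z'.2))
    (fun c _ _ => pairing_smul_right c _ _)

end Pairing

section Submodules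

def kdualSubmodule (L : Set (Ω →ₘ[μ] ℝ)) : Submodule ℝ (Ω →ₘ[μ] ℝ) where
  carrier := kdual L
  zero_mem' f _ := (integrable_zero Ω ℝ μ).congr <| by
    filter_upwards [AEEqFun.coeFn_zero (μ := μ) (β := ℝ)] with ω h
    simp [h]
  add_mem' {Z Z'} hZ hZ' f hf := ((hZ f hf).add (hZ' f hf)).congr <| by
    filter_upwards [AEEqFun.coeFn_add Z Z'] with ω h
    simp [h, mul_add]
  smul_mem' c Z hZ f hf := ((hZ f hf).const_mul c).congr <| by
    filter_upwards [AEEqFun.coeFn_smul c Z] with ω h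
    simp [h, mul_left_comm]

def IsAdmissible.submodule {L : Set (Ω →ₘ[μ] ℝ)} {nrm : (Ω →ₘ[μ] ℝ) → ℝ}
    (hL : IsAdmissible L nrm) : Submodule ℝ (Ω →ₘ[μ] ℝ) where
  carrier := L
  zero_mem' := hL.zero_mem
  add_mem' hf hg := hL.add_mem _ hf _ hg
  smul_mem' c _ hf := hL.smul_mem c _ hf

def admissibleProd {Li : Fin d → Set (Ω →ₘ[μ] ℝ)} {nrmX : Fin d → (Ω →ₘ[μ] ℝ) → ℝ}
    (hLi : ∀ i, IsAdmissible (Li i) (nrmX i)) : Submodule ℝ (Fin d → Ω →ₘ[μ] ℝ) where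
  carrier := prodSet Li
  zero_mem' i := (hLi i).zero_mem
  add_mem' hX hY i := (hLi i).add_mem _ (hX i) _ (hY i)
  smul_mem' c _ hX i := (hLi i).smul_mem c _ (hX i)

def kdualProd (Li : Fin d → Set (Ω →ₘ[μ] ℝ)) : Submodule ℝ (Fin d → Ω →ₘ[μ] ℝ) where
  carrier := prodSet fun i => kdual (Li i)
  zero_mem' i := (kdualSubmodule (Li i)).zero_mem
  add_mem' hZ hZ' i := (kdualSubmodule (Li i)).add_mem (hZ i) (hZ' i)
  smul_mem' c _ hZ i := (kdualSubmodule (Li i)).smul_mem c (hZ i)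

variable {EE : Set (Ω →ₘ[μ] ℝ)} {nrmE : (Ω →ₘ[μ] ℝ) → ℝ}
  {Li : Fin d → Set (Ω →ₘ[μ] ℝ)} {nrmX : Fin d → (Ω →ₘ[μ] ℝ) → ℝ}

/- The weak topologies of the following three pairings are, definitionally, `wtop1 EE (kdual EE)`,
`wtop (prodSet Li) X'` and `wtop X' (prodSet Li)`. -/

def bilinE (hE : IsAdmissible EE nrmE) :
    hE.submodule →ₗ[ℝ] kdualSubmodule (μ := μ) EE →ₗ[ℝ] ℝ :=
  ipBilin _ _ fun _ hU _ hW => hW _ hU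

def bilinX (hLi : ∀ i, IsAdmissible (Li i) (nrmX i)) :
    admissibleProd hLi →ₗ[ℝ] kdualProd Li →ₗ[ℝ] ℝ :=
  pairingBilin _ _ fun _ hX _ hZ i => hZ i _ (hX i)

def bilinXDual (hLi : ∀ i, IsAdmissible (Li i) (nrmX i)) :
    kdualProd Li →ₗ[ℝ] admissibleProd hLi →ₗ[ℝ] ℝ :=
  pairingBilin _ _ fun _ hZ _ hX i => by simpa only [mul_comm] using hZ i _ (hX i)

end Submodules

section Acceptance

variable {EE : Set (Ω →ₘ[μ] ℝ)} {nrmE : (Ω →ₘ[μ] ℝ) → ℝ} {A D : Set (Ω →ₘ[μ] ℝ)}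
  {XX : Set (Fin d → Ω →ₘ[μ] ℝ)} {S : (Fin d → Ω →ₘ[μ] ℝ) → Ω →ₘ[μ] ℝ}

theorem suppS_le_ip {U : Ω →ₘ[μ] ℝ} (hU : U ∈ A) (W : Ω →ₘ[μ] ℝ) : suppS A W ≤ ip U W :=
  iInf₂_le U hU

theorem suppS_zero (h0 : (0 : Ω →ₘ[μ] ℝ) ∈ A) : suppS A (0 : Ω →ₘ[μ] ℝ) = 0 :=
  le_antisymm (by simpa [ip_zero_left] using suppS_le_ip h0 0)
    (le_iInf₂ fun U _ => by simp [ip_zero_right])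

theorem exists_coe_eq_suppS (h0 : (0 : Ω →ₘ[μ] ℝ) ∈ A) {W : Ω →ₘ[μ] ℝ} (hW : W ∈ barrS A D) :
    ∃ s : ℝ, suppS A W = s := by
  have hle : suppS A W ≤ 0 := by simpa [ip_zero_left] using suppS_le_ip h0 W
  exact ⟨(suppS A W).toReal, (EReal.coe_toReal (hle.trans_lt EReal.zero_lt_top).ne hW.2.ne').symm⟩

theorem IsAdmissible.one_mem (hE : IsAdmissible EE nrmE) : (1 : Ω →ₘ[μ] ℝ) ∈ EE :=
  hE.linfty_subset 1 ⟨1, by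
    filter_upwards [AEEqFun.coeFn_one (μ := μ) (β := ℝ)] with ω h
    simp [h]⟩

theorem exists_ip_lt_of_notMem (hE : IsAdmissible EE nrmE)
    (hA : IsAdmissibleAcceptance XX EE (kdual EE) S A) {U₀ : Ω →ₘ[μ] ℝ} (hU₀ : U₀ ∈ EE)
    (hU₀A : U₀ ∉ A) : ∃ W ∈ kdual EE, ∃ u : ℝ, ip U₀ W < u ∧ ∀ U ∈ A, u < ip U W := by
  let C : Set (WeakBilin (bilinE hE)) := {U | Subtype.val U ∈ A}
  have hclosed : IsClosed C := hA.closed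
  have hconv : Convex ℝ C := fun U hU V hV a b ha hb hab => by
    obtain rfl : b = 1 - a := by linarith
    exact hA.convex _ hU _ hV a ha (by linarith)
  obtain ⟨W, u, hlt, hsep⟩ :=
    WeakBilin.exists_forall_lt_of_notMem _ hconv hclosed (x := ⟨U₀, hU₀⟩) hU₀A
  exact ⟨W, W.2, u, hlt, fun U hU => hsep ⟨U, hA.subset hU⟩ hU⟩

theorem mem_of_forall_suppS_le_ip (hE : IsAdmissible EE nrmE)
    (hA : IsAdmissibleAcceptance XX EE (kdual EE) S A) {U : Ω →ₘ[μ] ℝ} (hU : U ∈ EE)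
    (h : ∀ W ∈ barrS A (kdual EE), suppS A W ≤ ip U W) : U ∈ A := by
  by_contra hUA
  obtain ⟨W, hW, u, hlt, hsep⟩ := exists_ip_lt_of_notMem hE hA hU hUA
  have hu : (u : EReal) ≤ suppS A W := le_iInf₂ fun V hV => EReal.coe_le_coe_iff.mpr (hsep V hV).le
  have hWb : W ∈ barrS A (kdual EE) := ⟨hW, (EReal.bot_lt_coe u).trans_le hu⟩
  exact (hu.trans (h W hWb)).not_gt (EReal.coe_lt_coe_iff.mpr hlt)

theorem ip_nonneg_of_mem_barrS (hE : IsAdmissible EE nrmE)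
    (hA : IsAdmissibleAcceptance XX EE (kdual EE) S A) {W : Ω →ₘ[μ] ℝ}
    (hW : W ∈ barrS A (kdual EE)) {V : Ω →ₘ[μ] ℝ} (hV : V ∈ EE) (hV0 : 0 ≤ V) :
    0 ≤ ip V W := by
  by_contra! hneg
  refine hW.2.ne' ((EReal.eq_bot_iff_forall_lt _).mpr fun y => ?_)
  -- `c • V ∈ A` for every `c > 0`, so `σ_A(W) ≤ c E[V W]` is unbounded below
  set c := (|y| + 1) / -ip V W
  have hc : 0 < c := div_pos (by positivity) (neg_pos.mpr hneg)
  have hcV0 : 0 ≤ c • V := by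
    rw [← AEEqFun.coeFn_le] at hV0 ⊢
    filter_upwards [hV0, AEEqFun.coeFn_smul c V, AEEqFun.coeFn_zero (μ := μ) (β := ℝ)]
      with ω hω hcω h0
    simp only [hcω, h0, Pi.smul_apply, smul_eq_mul, Pi.zero_apply] at hω ⊢
    exact mul_nonneg hc.le (by simpa [h0] using hω)
  have hcV : c • V ∈ A := by
    simpa using hA.mono 0 hA.zero_mem _ (hE.smul_mem c V hV) hcV0
  calc suppS A W ≤ ip (c • V) W := suppS_le_ip hcV W
    _ = ((-(|y| + 1) : ℝ) : EReal) := by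
        rw [ip_smul_left, div_mul_eq_mul_div, div_neg, mul_div_cancel_right₀ _ hneg.ne]
    _ < y := EReal.coe_lt_coe_iff.mpr (by linarith [neg_abs_le y])

theorem nonneg_of_mem_barrS (hE : IsAdmissible EE nrmE)
    (hA : IsAdmissibleAcceptance XX EE (kdual EE) S A) {W : Ω →ₘ[μ] ℝ}
    (hW : W ∈ barrS A (kdual EE)) : 0 ≤ W := by
  have hint : Integrable W μ := (hW.1 1 (hE.one_mem)).congr <| by
    filter_upwards [AEEqFun.coeFn_one (μ := μ) (β := ℝ)] with ω h
    simp [h]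
  have hae : 0 ≤ᵐ[μ] W := ae_nonneg_of_forall_setIntegral_nonneg hint fun s hs _ => by
    let V : Ω →ₘ[μ] ℝ := AEEqFun.mk (s.indicator 1) (aestronglyMeasurable_const.indicator hs)
    have hV : V =ᵐ[μ] s.indicator 1 := AEEqFun.coeFn_mk _ _
    have hVE : V ∈ EE := hE.linfty_subset V ⟨1, by
      filter_upwards [hV] with ω h
      by_cases hω : ω ∈ s <;> simp [h, hω]⟩
    have hV0 : 0 ≤ V := by
      rw [← AEEqFun.coeFn_le]
      filter_upwards [hV, AEEqFun.coeFn_zero (μ := μ) (β := ℝ)] with ω h h0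
      by_cases hω : ω ∈ s <;> simp [h, h0, hω]
    calc 0 ≤ ip V W := ip_nonneg_of_mem_barrS hE hA hW hVE hV0
      _ = ∫ ω, s.indicator W ω ∂μ := integral_congr_ae <| by
          filter_upwards [hV] with ω h
          by_cases hω : ω ∈ s <;> simp [h, hω]
      _ = ∫ ω in s, W ω ∂μ := integral_indicator hs
  rw [← AEEqFun.coeFn_le]
  filter_upwards [hae, AEEqFun.coeFn_zero (μ := μ) (β := ℝ)] with ω h h0
  simpa [h0] using h

end Acceptance

section Penalty

variable {EE D : Set (Ω →ₘ[μ] ℝ)} {nrmE : (Ω →ₘ[μ] ℝ) → ℝ} {A : Set (Ω →ₘ[μ] ℝ)}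
  {XX : Set (Fin d → Ω →ₘ[μ] ℝ)} {S : (Fin d → Ω →ₘ[μ] ℝ) → Ω →ₘ[μ] ℝ}

theorem KZ_eq (Z X : Fin d → Ω →ₘ[μ] ℝ) (W : Ω →ₘ[μ] ℝ) :
    KZ A S Z X W = suppS A W + ((pairing X Z - ip (S X) W : ℝ) : EReal) := rfl

theorem KZ_eq_iInf (Z X : Fin d → Ω →ₘ[μ] ℝ) (W : Ω →ₘ[μ] ℝ) :
    KZ A S Z X W = ⨅ U ∈ A, ((ip U W + (pairing X Z - ip (S X) W) : ℝ) : EReal) := by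
  simp only [KZ_eq, suppS, EReal.iInf_add_coe, EReal.coe_add]

theorem iSup_iInf_KZ_eq_alpha (hA0 : (0 : Ω →ₘ[μ] ℝ) ∈ A) (hXX : XX.Nonempty)
    (Z : Fin d → Ω →ₘ[μ] ℝ) : (⨆ W ∈ D, ⨅ X ∈ XX, KZ A S Z X W) = alpha XX D A S Z := by
  unfold alpha penalty
  refine le_antisymm (iSup₂_le fun W hW => ?_) (iSup₂_le fun W hW => ?_)
  · by_cases hWb : W ∈ barrS A D
    · obtain ⟨s, hs⟩ := exists_coe_eq_suppS hA0 hWb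
      refine le_iSup₂_of_le W hWb (le_of_eq ?_)
      simp only [KZ, hs, add_comm (s : EReal), EReal.iInf_add_coe]
    · have hbot : suppS A W = ⊥ := not_bot_lt_iff.mp fun h => hWb ⟨hW, h⟩
      obtain ⟨X₀, hX₀⟩ := hXX
      exact (iInf₂_le X₀ hX₀).trans (by simp [KZ, hbot])
  · exact le_iSup₂_of_le W hW.1 (le_iInf₂ fun X hX => add_le_add_right (iInf₂_le X hX) _)

theorem iSup_KZ_of_mem (hA0 : (0 : Ω →ₘ[μ] ℝ) ∈ A) (hD0 : (0 : Ω →ₘ[μ] ℝ) ∈ D)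
    {X : Fin d → Ω →ₘ[μ] ℝ} (hX : S X ∈ A) (Z : Fin d → Ω →ₘ[μ] ℝ) :
    (⨆ W ∈ D, KZ A S Z X W) = pairing X Z := by
  refine le_antisymm (iSup₂_le fun W _ => ?_) (le_iSup₂_of_le 0 hD0 ?_)
  · calc KZ A S Z X W ≤ (ip (S X) W : EReal) + ((pairing X Z - ip (S X) W : ℝ) : EReal) :=
          add_le_add_left (suppS_le_ip hX W) _
      _ = pairing X Z := by rw [← EReal.coe_add, add_sub_cancel]
  · simp [KZ_eq, suppS_zero hA0, ip_zero_right]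

theorem iSup_KZ_of_notMem (hE : IsAdmissible EE nrmE)
    (hA : IsAdmissibleAcceptance XX EE (kdual EE) S A) {X : Fin d → Ω →ₘ[μ] ℝ}
    (hXE : S X ∈ EE) (hX : S X ∉ A) (Z : Fin d → Ω →ₘ[μ] ℝ) :
    (⨆ W ∈ kdual EE, KZ A S Z X W) = ⊤ := by
  obtain ⟨W, hW, u, hlt, hsep⟩ := exists_ip_lt_of_notMem hE hA hXE hX
  refine (EReal.eq_top_iff_forall_lt _).mpr fun y => ?_
  -- `K_Z(X, c W)` grows like `c (u - E[S(X) W])`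
  set ε := u - ip (S X) W
  set c := (|y - pairing X Z| + 1) / ε
  have hε : 0 < ε := sub_pos.mpr hlt
  have hc : 0 < c := by positivity
  have hcε : c * ε = |y - pairing X Z| + 1 := div_mul_cancel₀ _ hε.ne'
  have hsupp : ((c * u : ℝ) : EReal) ≤ suppS A (c • W) := le_iInf₂ fun U hU => by
    rw [ip_smul_right]
    exact EReal.coe_le_coe_iff.mpr (mul_le_mul_of_nonneg_left (hsep U hU).le hc.le)
  refine lt_of_lt_of_le ?_ (le_iSup₂_of_le (c • W) ((kdualSubmodule EE).smul_mem c hW)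
    (add_le_add_left hsupp _))
  change (y : EReal) < ((c * u : ℝ) : EReal) + ((pairing X Z - ip (S X) (c • W) : ℝ) : EReal)
  rw [ip_smul_right, ← EReal.coe_add, EReal.coe_lt_coe_iff]
  have : c * u + (pairing X Z - c * ip (S X) W) = pairing X Z + c * ε := by ring
  linarith [le_abs_self (y - pairing X Z)]

theorem iInf_iSup_KZ_eq_suppV (hE : IsAdmissible EE nrmE)
    (hA : IsAdmissibleAcceptance XX EE (kdual EE) S A) (hmaps : ∀ X ∈ XX, S X ∈ EE)
    (Z : Fin d → Ω →ₘ[μ] ℝ) :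
    (⨅ X ∈ XX, ⨆ W ∈ kdual EE, KZ A S Z X W) = suppV (sysAcc XX S A) Z := by
  have hD0 : (0 : Ω →ₘ[μ] ℝ) ∈ kdual EE := (kdualSubmodule EE).zero_mem
  refine le_antisymm (le_iInf₂ fun X hX => ?_) (le_iInf₂ fun X hX => ?_)
  · rw [← iSup_KZ_of_mem hA.zero_mem hD0 hX.2]
    exact iInf₂_le X hX.1
  · by_cases hSX : S X ∈ A
    · rw [iSup_KZ_of_mem hA.zero_mem hD0 hSX]
      exact iInf₂_le X ⟨hX, hSX⟩
    · rw [iSup_KZ_of_notMem hE hA (hmaps X hX) hSX]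
      exact le_top

theorem alpha_le_suppV (Z : Fin d → Ω →ₘ[μ] ℝ) :
    alpha XX D A S Z ≤ suppV (sysAcc XX S A) Z := by
  refine iSup₂_le fun W _ => le_iInf₂ fun X hX => ?_
  calc suppS A W + ⨅ X' ∈ XX, ((pairing X' Z - ∫ ω, S X' ω * W ω ∂μ : ℝ) : EReal)
      ≤ (ip (S X) W : EReal) + ((pairing X Z - ip (S X) W : ℝ) : EReal) :=
        add_le_add (suppS_le_ip hX.2 W) (iInf₂_le X hX.1)
    _ = pairing X Z := by rw [← EReal.coe_add, add_sub_cancel]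

theorem upperSemicontinuous_suppV {P Q B : Set (Fin d → Ω →ₘ[μ] ℝ)} (hB : B ⊆ Q) :
    @UpperSemicontinuous P EReal (wtop P Q) _ fun Z => suppV B (Z : Fin d → Ω →ₘ[μ] ℝ) := by
  have hcont : ∀ X ∈ B, @Continuous P EReal (wtop P Q) _ fun Z => (pairing X Z : EReal) :=
    fun X hX => by
      simp only [pairing_comm X]
      exact @Continuous.comp P (Q → ℝ) EReal (wtop P Q) _ _ _ _
        (continuous_coe_real_ereal.comp (continuous_apply ⟨X, hB hX⟩)) continuous_induced_dom
  exact @upperSemicontinuous_biInf _ (wtop P Q) _ _ _ _ _ fun X hX =>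
    @Continuous.upperSemicontinuous _ (wtop P Q) _ _ _ _ _ (hcont X hX)

end Penalty

section Duality

variable {Li : Fin d → Set (Ω →ₘ[μ] ℝ)} {nrmX : Fin d → (Ω →ₘ[μ] ℝ) → ℝ}
  {EE : Set (Ω →ₘ[μ] ℝ)} {nrmE : (Ω →ₘ[μ] ℝ) → ℝ}
  {S : (Fin d → Ω →ₘ[μ] ℝ) → Ω →ₘ[μ] ℝ} {A : Set (Ω →ₘ[μ] ℝ)}

theorem concaveOn_ip_impact (hLi : ∀ i, IsAdmissible (Li i) (nrmX i))
    (hE : IsAdmissible EE nrmE)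
    (hS : IsAdmissibleImpact (prodSet Li) (prodSet fun i => kdual (Li i)) EE (kdual EE) S)
    {W : Ω →ₘ[μ] ℝ} (hW : W ∈ kdual EE) (hW0 : 0 ≤ W) :
    ConcaveOn ℝ univ fun X : WeakBilin (bilinX hLi) => ip (S (Subtype.val X)) W := by
  refine ⟨convex_univ, fun X _ Y _ a b ha hb hab => ?_⟩
  obtain rfl : b = 1 - a := by linarith
  have hSX := hS.mapsTo _ X.2
  have hSY := hS.mapsTo _ Y.2
  have hSXY := hS.mapsTo _ (a • X + (1 - a) • Y).2
  calc a • ip (S X.1) W + (1 - a) • ip (S Y.1) W = ip (a • S X.1 + (1 - a) • S Y.1) W := by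
        rw [ip_add_left (hW _ (hE.smul_mem _ _ hSX)) (hW _ (hE.smul_mem _ _ hSY)),
          ip_smul_left, ip_smul_left, smul_eq_mul, smul_eq_mul]
    _ ≤ ip (S (a • X.1 + (1 - a) • Y.1)) W :=
        ip_le_ip_of_le (hS.concave _ X.2 _ Y.2 a ha (by linarith)) hW0
          (hW _ (hE.add_mem _ (hE.smul_mem _ _ hSX) _ (hE.smul_mem _ _ hSY))) (hW _ hSXY)

theorem mem_of_alpha_le_pairing (hLi : ∀ i, IsAdmissible (Li i) (nrmX i))
    (hE : IsAdmissible EE nrmE)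
    (hS : IsAdmissibleImpact (prodSet Li) (prodSet fun i => kdual (Li i)) EE (kdual EE) S)
    (hA : IsAdmissibleAcceptance (prodSet Li) EE (kdual EE) S A)
    {Y : Fin d → Ω →ₘ[μ] ℝ} (hY : Y ∈ prodSet Li)
    (h : ∀ Z ∈ prodSet fun i => kdual (Li i), alpha (prodSet Li) (kdual EE) A S Z ≤ pairing Y Z) :
    S Y ∈ A := by
  refine mem_of_forall_suppS_le_ip hE hA (hS.mapsTo Y hY) fun W hW => ?_
  obtain ⟨s, hs⟩ := exists_coe_eq_suppS hA.zero_mem hW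
  have hW0 := nonneg_of_mem_barrS hE hA hW
  rw [hs, EReal.coe_le_coe_iff]
  refine le_of_forall_pos_lt_add fun ε hε => ?_
  -- an `ε/2`-supergradient `Z` of `X ↦ E[S(X) W]` at `Y` makes `W` nearly optimal in `α(Z)`
  obtain ⟨Z, hZ⟩ := WeakBilin.exists_forall_sub_le_of_concaveOn (bilinX hLi)
    (concaveOn_ip_impact hLi hE hS hW.1 hW0) (hS.usc W hW.1 hW0) ⟨Y, hY⟩ (half_pos hε)
  have hα : ((s + (pairing Y Z - ip (S Y) W - ε / 2) : ℝ) : EReal) ≤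
      alpha (prodSet Li) (kdual EE) A S Z := by
    refine le_iSup₂_of_le W hW ?_
    rw [hs, EReal.coe_add]
    refine add_le_add_right (le_iInf₂ fun X hX => EReal.coe_le_coe_iff.mpr ?_) _
    have hZX : ip (S X) W - pairing X Z ≤ ip (S Y) W - pairing Y Z + ε / 2 := hZ ⟨X, hX⟩
    change _ ≤ pairing X Z - ip (S X) W
    linarith
  linarith [EReal.coe_le_coe_iff.mp (hα.trans (h Z Z.2))]

def penaltyFunctional (hLi : ∀ i, IsAdmissible (Li i) (nrmX i)) (hE : IsAdmissible EE nrmE)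
    (hS : ∀ X ∈ prodSet Li, S X ∈ EE) (hA : A ⊆ EE) (p : A × prodSet Li) :
    kdualSubmodule EE × kdualProd Li →ₗ[ℝ] ℝ :=
  (bilinE hE ⟨p.1, hA p.1.2⟩ - bilinE hE ⟨S p.2, hS _ p.2.2⟩).coprod (bilinX hLi ⟨p.2, p.2.2⟩)

theorem penaltyFunctional_apply (hLi : ∀ i, IsAdmissible (Li i) (nrmX i))
    (hE : IsAdmissible EE nrmE) (hS : ∀ X ∈ prodSet Li, S X ∈ EE) (hA : A ⊆ EE)
    (p : A × prodSet Li) (W : kdualSubmodule EE) (Z : kdualProd Li) :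
    penaltyFunctional hLi hE hS hA p (W, Z) =
      ip (p.1 : Ω →ₘ[μ] ℝ) W + (pairing (p.2 : Fin d → Ω →ₘ[μ] ℝ) Z - ip (S p.2) W) := by
  simp only [penaltyFunctional, LinearMap.coprod_apply, LinearMap.sub_apply]
  change ip _ _ - ip _ _ + pairing _ _ = _
  ring

theorem alpha_eq_iSup_iInf (hLi : ∀ i, IsAdmissible (Li i) (nrmX i))
    (hE : IsAdmissible EE nrmE)
    (hS : IsAdmissibleImpact (prodSet Li) (prodSet fun i => kdual (Li i)) EE (kdual EE) S)
    (hA : IsAdmissibleAcceptance (prodSet Li) EE (kdual EE) S A) (Z : kdualProd Li) :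
    alpha (prodSet Li) (kdual EE) A S Z =
      ⨆ W, ⨅ p, (penaltyFunctional hLi hE hS.mapsTo hA.subset p (W, Z) : EReal) := by
  rw [← iSup_iInf_KZ_eq_alpha hA.zero_mem (⟨0, fun i => (hLi i).zero_mem⟩ : (prodSet Li).Nonempty)]
  simp only [KZ_eq_iInf, iSup_subtype', iInf_subtype', iInf_prod, penaltyFunctional_apply]
  exact iSup_congr fun W => iInf_comm

theorem suppV_le_alpha_of_upperSemicontinuous (hLi : ∀ i, IsAdmissible (Li i) (nrmX i))
    (hE : IsAdmissible EE nrmE)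
    (hS : IsAdmissibleImpact (prodSet Li) (prodSet fun i => kdual (Li i)) EE (kdual EE) S)
    (hA : IsAdmissibleAcceptance (prodSet Li) EE (kdual EE) S A)
    (husc : @UpperSemicontinuous (prodSet fun i => kdual (Li i)) EReal
      (wtop (prodSet fun i => kdual (Li i)) (prodSet Li)) _
      fun Z => alpha (prodSet Li) (kdual EE) A S (Z : Fin d → Ω →ₘ[μ] ℝ))
    {Z₀ : Fin d → Ω →ₘ[μ] ℝ} (hZ₀ : Z₀ ∈ prodSet fun i => kdual (Li i)) :
    suppV (sysAcc (prodSet Li) S A) Z₀ ≤ alpha (prodSet Li) (kdual EE) A S Z₀ := by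
  by_contra! hlt
  obtain ⟨t₀, hαt₀, ht₀σ⟩ := EReal.exists_between_coe_real hlt
  obtain ⟨X₀, hX₀, hSX₀⟩ := hA.preimage_nonempty
  set ℓ := penaltyFunctional hLi hE hS.mapsTo hA.subset
  set f : WeakBilin (bilinXDual hLi) → EReal :=
    fun Z => alpha (prodSet Li) (kdual EE) A S (Subtype.val Z)
  have hf : ∀ Z, f Z = ⨆ W, ⨅ p, (ℓ p (W, Z) : EReal) := alpha_eq_iSup_iInf hLi hE hS hA
  have hadd : ∀ Z₁ Z₂, f Z₁ + f Z₂ ≤ f (Z₁ + Z₂) := fun Z₁ Z₂ => by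
    rw [hf, hf, hf]
    exact iSup_iInf_linear_add_le ℓ Z₁ Z₂
  have hsmul : ∀ c : ℝ, 0 < c → ∀ Z (t : ℝ), (t : EReal) ≤ f Z →
      ((c * t : ℝ) : EReal) ≤ f (c • Z) := fun c hc Z t ht => by
      rw [hf] at ht ⊢
      exact coe_mul_le_iSup_iInf_linear_smul ℓ hc ht
  have h0 : 0 ≤ f 0 := by
    rw [hf]
    exact le_iSup_of_le 0 (le_iInf fun p => EReal.coe_nonneg.mpr (map_zero (ℓ p)).ge)
  have hX₀ : ∀ Z, f Z ≤ bilinXDual hLi Z ⟨X₀, hX₀⟩ := fun Z =>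
    (alpha_le_suppV _).trans <| (iInf₂_le X₀ ⟨hX₀, hSX₀⟩).trans_eq <|
      congrArg _ (pairing_comm X₀ (Subtype.val Z))
  obtain ⟨Y, hαY, hYZ₀⟩ := WeakBilin.exists_le_and_lt_of_superlinear (bilinXDual hLi) husc
    hadd hsmul h0 hX₀ (z₀ := ⟨Z₀, hZ₀⟩) hαt₀
  have hSY : S Y ∈ A := mem_of_alpha_le_pairing hLi hE hS hA Y.2 fun Z hZ =>
    (hαY ⟨Z, hZ⟩).trans_eq (congrArg _ (pairing_comm Z Y.1))
  have hσY : suppV (sysAcc (prodSet Li) S A) Z₀ ≤ pairing Y.1 Z₀ := iInf₂_le _ ⟨Y.2, hSY⟩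
  rw [pairing_comm] at hσY
  exact (ht₀σ.trans_le hσY).not_gt (EReal.coe_lt_coe_iff.mpr hYZ₀)

end Duality

theorem statement11_general {μ : Measure Ω} {d : ℕ}
    (Li : Fin d → Set (Ω →ₘ[μ] ℝ)) (nrmX : Fin d → ((Ω →ₘ[μ] ℝ) → ℝ))
    (EE : Set (Ω →ₘ[μ] ℝ)) (nrmE : (Ω →ₘ[μ] ℝ) → ℝ)
    (S : (Fin d → (Ω →ₘ[μ] ℝ)) → (Ω →ₘ[μ] ℝ)) (A : Set (Ω →ₘ[μ] ℝ))
    (hLi : ∀ i, IsAdmissible (Li i) (nrmX i))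
    (hE : IsAdmissible EE nrmE)
    (hS : IsAdmissibleImpact (prodSet Li) (prodSet fun i => kdual (Li i)) EE (kdual EE) S)
    (hA : IsAdmissibleAcceptance (prodSet Li) EE (kdual EE) S A) :
    ((∀ Z ∈ prodSet fun i => kdual (Li i),
        suppV (sysAcc (prodSet Li) S A) Z = alpha (prodSet Li) (kdual EE) A S Z) ↔
      @UpperSemicontinuous (↥(prodSet fun i => kdual (Li i))) EReal
        (wtop (prodSet fun i => kdual (Li i)) (prodSet Li)) _
        (fun Z : ↥(prodSet fun i => kdual (Li i)) =>
          alpha (prodSet Li) (kdual EE) A S (Z : Fin d → (Ω →ₘ[μ] ℝ)))) ∧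
    ((∀ Z ∈ prodSet fun i => kdual (Li i),
        suppV (sysAcc (prodSet Li) S A) Z = alpha (prodSet Li) (kdual EE) A S Z) ↔
      ∀ Z ∈ prodSet fun i => kdual (Li i),
        (⨅ X ∈ prodSet Li, ⨆ W ∈ kdual EE, KZ A S Z X W) =
          (⨆ W ∈ kdual EE, ⨅ X ∈ prodSet Li, KZ A S Z X W)) := by
  have hminimax : ∀ Z, (⨅ X ∈ prodSet Li, ⨆ W ∈ kdual EE, KZ A S Z X W) =
      (⨆ W ∈ kdual EE, ⨅ X ∈ prodSet Li, KZ A S Z X W) ↔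
        suppV (sysAcc (prodSet Li) S A) Z = alpha (prodSet Li) (kdual EE) A S Z := fun Z => by
    rw [iInf_iSup_KZ_eq_suppV hE hA hS.mapsTo,
      iSup_iInf_KZ_eq_alpha hA.zero_mem (⟨0, fun i => (hLi i).zero_mem⟩ : (prodSet Li).Nonempty)]
  refine ⟨⟨fun h => ?_, fun husc Z hZ => ?_⟩, forall₂_congr fun Z _ => (hminimax Z).symm⟩
  · have hσ := upperSemicontinuous_suppV (P := prodSet fun i => kdual (Li i))
      (B := sysAcc (prodSet Li) S A) fun X hX => hX.1
    rwa [funext fun Z : prodSet fun i => kdual (Li i) => h Z Z.2] at hσ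
  · exact le_antisymm (suppV_le_alpha_of_upperSemicontinuous hLi hE hS hA husc hZ)
      (alpha_le_suppV Z)

/-- `σ_{S⁻¹(A)} = α` iff `α` is `σ(X',X)`-upper semicontinuous iff a minimax
identity for `K_Z` holds for every `Z ∈ X'`. -/
theorem statement11 {μ : Measure Ω} [IsProbabilityMeasure μ] {d : ℕ}
    (Li : Fin d → Set (Ω →ₘ[μ] ℝ)) (nrmX : Fin d → ((Ω →ₘ[μ] ℝ) → ℝ))
    (EE : Set (Ω →ₘ[μ] ℝ)) (nrmE : (Ω →ₘ[μ] ℝ) → ℝ)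
    (S : (Fin d → (Ω →ₘ[μ] ℝ)) → (Ω →ₘ[μ] ℝ)) (A : Set (Ω →ₘ[μ] ℝ))
    (hLi : ∀ i, IsAdmissible (Li i) (nrmX i))
    (hE : IsAdmissible EE nrmE)
    (hS : IsAdmissibleImpact (prodSet Li) (prodSet fun i => kdual (Li i)) EE (kdual EE) S)
    (hA : IsAdmissibleAcceptance (prodSet Li) EE (kdual EE) S A) :
    ((∀ Z ∈ prodSet fun i => kdual (Li i),
        suppV (sysAcc (prodSet Li) S A) Z = alpha (prodSet Li) (kdual EE) A S Z) ↔
      @UpperSemicontinuous (↥(prodSet fun i => kdual (Li i))) EReal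
        (wtop (prodSet fun i => kdual (Li i)) (prodSet Li)) _
        (fun Z : ↥(prodSet fun i => kdual (Li i)) =>
          alpha (prodSet Li) (kdual EE) A S (Z : Fin d → (Ω →ₘ[μ] ℝ)))) ∧
    ((∀ Z ∈ prodSet fun i => kdual (Li i),
        suppV (sysAcc (prodSet Li) S A) Z = alpha (prodSet Li) (kdual EE) A S Z) ↔
      ∀ Z ∈ prodSet fun i => kdual (Li i),
        (⨅ X ∈ prodSet Li, ⨆ W ∈ kdual EE, KZ A S Z X W) =
          (⨆ W ∈ kdual EE, ⨅ X ∈ prodSet Li, KZ A S Z X W)) :=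
  statement11_general Li nrmX EE nrmE S A hLi hE hS hA

end SystemicRisk
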